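/- Let β ≥ 1, 0 < λ < R, r ∈ ℕ, and let φ be a smooth (2π)ℤ^d-periodic function with ‖φ‖_{β,R} < ∞. Then ∑_{γ∈ℕ^d, |γ|_1 = r} ‖∂^γ φ‖_{β,R−λ} ≤ (r!/λ^r)^β · ‖φ‖_{β,R} (Cauchy estimate for Gevrey norms). -/

import Mathlib

open scoped BigOperators

/-- The partial derivative `∂_i f` of a function `f : ℝ^d → ℝ`. -/
noncomputable def gevPDeriv {d : ℕ} (i : Fin d) (f : (Fin d → ℝ) → ℝ) :
    (Fin d → ℝ) → ℝ :=
  fun x => fderiv ℝ f x (Pi.single i 1)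

/-- The multi-index partial derivative `∂^k f = ∂_1^{k_1} ⋯ ∂_d^{k_d} f`. -/
noncomputable def gevMDeriv {d : ℕ} (k : Fin d → ℕ) (f : (Fin d → ℝ) → ℝ) :
    (Fin d → ℝ) → ℝ :=
  (List.finRange d).foldr (fun i g => (gevPDeriv i)^[k i] g) f

/-- The sup-norm `‖f‖_{C⁰} = sup_x |f x|`. -/
noncomputable def supNorm {d : ℕ} (f : (Fin d → ℝ) → ℝ) : ℝ := ⨆ x, |f x|

/-- The `k`-th term `(R^{β|k|₁}/(k!)^β)‖∂^k f‖_{C⁰}` of the Gevrey norm. -/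
noncomputable def gevreyTerm {d : ℕ} (β R : ℝ) (f : (Fin d → ℝ) → ℝ)
    (k : Fin d → ℕ) : ℝ :=
  R ^ (β * ∑ i, (k i : ℝ)) / (∏ i, ((k i).factorial : ℝ)) ^ β * supNorm (gevMDeriv k f)

/-- The Gevrey norm `‖f‖_{β,R} = ∑_{k∈ℕ^d} (R^{β|k|₁}/(k!)^β)‖∂^k f‖_{C⁰}`. -/
noncomputable def gevreyNorm {d : ℕ} (β R : ℝ) (f : (Fin d → ℝ) → ℝ) : ℝ :=
  ∑' k : Fin d → ℕ, gevreyTerm β R f k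

/-- `f : ℝ^d → ℝ` is `(2π)ℤ^d`-periodic. -/
def Periodic2pi {d : ℕ} (f : (Fin d → ℝ) → ℝ) : Prop :=
  ∀ (x : Fin d → ℝ) (m : Fin d → ℤ), f (fun i => x i + 2 * Real.pi * m i) = f x

/-! ### Auxiliary lemmas: smoothness and commutation of partial derivatives -/

lemma gevPDeriv_contDiff {d : ℕ} (i : Fin d) {f : (Fin d → ℝ) → ℝ}
    (hf : ContDiff ℝ (⊤ : ℕ∞) f) : ContDiff ℝ (⊤ : ℕ∞) (gevPDeriv i f) := by
  have : gevPDeriv i f =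
      (ContinuousLinearMap.apply ℝ ℝ (Pi.single i 1 : Fin d → ℝ)) ∘ (fderiv ℝ f) := rfl
  rw [this]
  exact (ContinuousLinearMap.apply ℝ ℝ _).contDiff.comp (hf.fderiv_right (m := (⊤ : ℕ∞)) (by simp))

lemma gevPDeriv_comm {d : ℕ} {f : (Fin d → ℝ) → ℝ} (hf : ContDiff ℝ (⊤ : ℕ∞) f) (i j : Fin d) :
    gevPDeriv i (gevPDeriv j f) = gevPDeriv j (gevPDeriv i f) := by
  funext x
  have hdf : ∀ y, HasFDerivAt f (fderiv ℝ f y) y := fun y =>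
    ((hf.differentiable (by simp)) y).hasFDerivAt
  have h2 : DifferentiableAt ℝ (fderiv ℝ f) x :=
    ((hf.fderiv_right (m := (⊤ : ℕ∞)) (by simp)).differentiable (by simp)) x
  have hsymm := second_derivative_symmetric hdf h2.hasFDerivAt
  have key : ∀ v : Fin d → ℝ, fderiv ℝ (fun y => fderiv ℝ f y v) x =
      (fderiv ℝ (fderiv ℝ f) x).flip v := by
    intro v
    have h := h2.hasFDerivAt.clm_apply (hasFDerivAt_const v x)
    simpa using h.fderiv
  have e1 : gevPDeriv i (gevPDeriv j f) x
      = fderiv ℝ (fderiv ℝ f) x (Pi.single i 1) (Pi.single j 1) := by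
    show fderiv ℝ (fun y => fderiv ℝ f y (Pi.single j 1)) x (Pi.single i 1) = _
    rw [key]; rfl
  have e2 : gevPDeriv j (gevPDeriv i f) x
      = fderiv ℝ (fderiv ℝ f) x (Pi.single j 1) (Pi.single i 1) := by
    show fderiv ℝ (fun y => fderiv ℝ f y (Pi.single i 1)) x (Pi.single j 1) = _
    rw [key]; rfl
  rw [e1, e2]; exact hsymm _ _

lemma pderiv_iter_contDiff {d : ℕ} (i : Fin d) (n : ℕ) {f : (Fin d → ℝ) → ℝ}
    (hf : ContDiff ℝ (⊤ : ℕ∞) f) : ContDiff ℝ (⊤ : ℕ∞) ((gevPDeriv i)^[n] f) := by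
  induction n with
  | zero => exact hf
  | succ n ih => rw [Function.iterate_succ_apply']; exact gevPDeriv_contDiff i ih

lemma pderiv_iter_comm {d : ℕ} (i j : Fin d) (n : ℕ) {f : (Fin d → ℝ) → ℝ}
    (hf : ContDiff ℝ (⊤ : ℕ∞) f) :
    gevPDeriv i ((gevPDeriv j)^[n] f) = (gevPDeriv j)^[n] (gevPDeriv i f) := by
  induction n with
  | zero => rfl
  | succ n ih =>
    rw [Function.iterate_succ_apply', gevPDeriv_comm (pderiv_iter_contDiff j n hf) i j, ih,
      ← Function.iterate_succ_apply' (gevPDeriv j) n (gevPDeriv i f)]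

lemma pderiv_iter_iter_comm {d : ℕ} (i j : Fin d) (m n : ℕ) {f : (Fin d → ℝ) → ℝ}
    (hf : ContDiff ℝ (⊤ : ℕ∞) f) :
    (gevPDeriv i)^[m] ((gevPDeriv j)^[n] f) = (gevPDeriv j)^[n] ((gevPDeriv i)^[m] f) := by
  induction m with
  | zero => rfl
  | succ m ih =>
    rw [Function.iterate_succ_apply', ih,
      pderiv_iter_comm i j n (pderiv_iter_contDiff i m hf),
      ← Function.iterate_succ_apply' (gevPDeriv i) m f]

lemma foldr_contDiff {d : ℕ} (k : Fin d → ℕ) (L : List (Fin d)) {f : (Fin d → ℝ) → ℝ}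
    (hf : ContDiff ℝ (⊤ : ℕ∞) f) :
    ContDiff ℝ (⊤ : ℕ∞) (L.foldr (fun i g => (gevPDeriv i)^[k i] g) f) := by
  induction L with
  | nil => exact hf
  | cons i L ih => exact pderiv_iter_contDiff i (k i) ih

lemma foldr_iter_comm {d : ℕ} (k : Fin d → ℕ) (L : List (Fin d)) (i : Fin d) (n : ℕ)
    {f : (Fin d → ℝ) → ℝ} (hf : ContDiff ℝ (⊤ : ℕ∞) f) :
    L.foldr (fun j g => (gevPDeriv j)^[k j] g) ((gevPDeriv i)^[n] f)
      = (gevPDeriv i)^[n] (L.foldr (fun j g => (gevPDeriv j)^[k j] g) f) := by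
  induction L with
  | nil => rfl
  | cons j L ih =>
    simp only [List.foldr_cons]
    rw [ih, pderiv_iter_iter_comm j i (k j) n (foldr_contDiff k L hf)]

lemma foldr_add {d : ℕ} (k γ : Fin d → ℕ) (L : List (Fin d)) {f : (Fin d → ℝ) → ℝ}
    (hf : ContDiff ℝ (⊤ : ℕ∞) f) :
    L.foldr (fun i g => (gevPDeriv i)^[k i] g)
        (L.foldr (fun i g => (gevPDeriv i)^[γ i] g) f)
      = L.foldr (fun i g => (gevPDeriv i)^[k i + γ i] g) f := by
  induction L with
  | nil => rfl
  | cons i L ih =>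
    simp only [List.foldr_cons]
    rw [foldr_iter_comm k L i (γ i) (foldr_contDiff γ L hf),
      ← Function.iterate_add_apply, ih]

lemma gevMDeriv_gevMDeriv {d : ℕ} (k γ : Fin d → ℕ) {f : (Fin d → ℝ) → ℝ}
    (hf : ContDiff ℝ (⊤ : ℕ∞) f) :
    gevMDeriv k (gevMDeriv γ f) = gevMDeriv (k + γ) f := foldr_add k γ _ hf

/-! ### Auxiliary lemmas: positivity -/

lemma supNorm_nonneg {d : ℕ} (f : (Fin d → ℝ) → ℝ) : 0 ≤ supNorm f :=
  Real.iSup_nonneg fun _ => abs_nonneg _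

lemma gevreyTerm_nonneg {d : ℕ} {β R : ℝ} (hR : 0 ≤ R) (f : (Fin d → ℝ) → ℝ)
    (k : Fin d → ℕ) : 0 ≤ gevreyTerm β R f k :=
  mul_nonneg (div_nonneg (Real.rpow_nonneg hR _)
    (Real.rpow_nonneg (by positivity) _)) (supNorm_nonneg _)

/-! ### The combinatorial core inequality -/

open Finset Classical in
lemma gev_core1 {d : ℕ} (r : ℕ) (lam mu : ℝ) (hlam : 0 ≤ lam) (hmu : 0 ≤ mu)
    (m : Fin d → ℕ) :
    ∑ γ ∈ Finset.Nat.antidiagonalTuple d r,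
      (if γ ≤ m then lam ^ r * mu ^ (∑ i, m i - r) *
        ∏ i, (((m i).factorial : ℝ) / ((m i - γ i).factorial : ℝ)) else 0)
    ≤ (r.factorial : ℝ) * (lam + mu) ^ (∑ i, m i) := by
  classical
  rw [← Finset.sum_filter]
  have step1 : ∀ γ ∈ (Finset.Nat.antidiagonalTuple d r).filter (· ≤ m),
      lam ^ r * mu ^ (∑ i, m i - r) *
          ∏ i, (((m i).factorial : ℝ) / ((m i - γ i).factorial : ℝ))
        ≤ (r.factorial : ℝ) *
          ∏ i, (lam ^ (γ i) * mu ^ (m i - γ i) * ((m i).choose (γ i) : ℝ)) := by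
    intro γ hγ
    rw [Finset.mem_filter, Finset.Nat.mem_antidiagonalTuple] at hγ
    obtain ⟨hsum, hle⟩ := hγ
    have hle' : ∀ i, γ i ≤ m i := fun i => hle i
    have hquot : ∀ i, (((m i).factorial : ℝ) / ((m i - γ i).factorial : ℝ))
        = ((γ i).factorial : ℝ) * ((m i).choose (γ i) : ℝ) := by
      intro i
      rw [div_eq_iff (by positivity)]
      rw [← Nat.cast_mul, ← Nat.cast_mul, ← Nat.choose_mul_factorial_mul_factorial (hle' i)]
      push_cast
      ring
    have hlamr : lam ^ r = ∏ i, lam ^ (γ i) := by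
      rw [Finset.prod_pow_eq_pow_sum, hsum]
    have hsub : ∑ i, (m i - γ i) = ∑ i, m i - r := by
      have h1 : ∑ i, (m i - γ i) + ∑ i, γ i = ∑ i, m i := by
        rw [← Finset.sum_add_distrib]
        exact Finset.sum_congr rfl fun i _ => Nat.sub_add_cancel (hle' i)
      omega
    have hmur : mu ^ (∑ i, m i - r) = ∏ i, mu ^ (m i - γ i) := by
      rw [Finset.prod_pow_eq_pow_sum, hsub]
    calc lam ^ r * mu ^ (∑ i, m i - r) *
          ∏ i, (((m i).factorial : ℝ) / ((m i - γ i).factorial : ℝ))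
        = (∏ i, ((γ i).factorial : ℝ)) *
          ∏ i, (lam ^ (γ i) * mu ^ (m i - γ i) * ((m i).choose (γ i) : ℝ)) := by
          simp only [hquot]
          rw [hlamr, hmur, ← Finset.prod_mul_distrib, ← Finset.prod_mul_distrib,
            ← Finset.prod_mul_distrib]
          exact Finset.prod_congr rfl fun i _ => by ring
      _ ≤ (r.factorial : ℝ) *
          ∏ i, (lam ^ (γ i) * mu ^ (m i - γ i) * ((m i).choose (γ i) : ℝ)) := by
          apply mul_le_mul_of_nonneg_right _ (by positivity)
          have : (∏ i, (γ i).factorial) ≤ r.factorial := by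
            rw [← hsum]
            exact Nat.le_of_dvd (Nat.factorial_pos _)
              (Nat.prod_factorial_dvd_factorial_sum _ _)
          exact_mod_cast (Nat.cast_le).mpr this
  calc ∑ γ ∈ (Finset.Nat.antidiagonalTuple d r).filter (· ≤ m),
        (lam ^ r * mu ^ (∑ i, m i - r) *
          ∏ i, (((m i).factorial : ℝ) / ((m i - γ i).factorial : ℝ)))
      ≤ ∑ γ ∈ (Finset.Nat.antidiagonalTuple d r).filter (· ≤ m),
        ((r.factorial : ℝ) *
          ∏ i, (lam ^ (γ i) * mu ^ (m i - γ i) * ((m i).choose (γ i) : ℝ))) :=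
        Finset.sum_le_sum step1
    _ ≤ ∑ γ ∈ Fintype.piFinset (fun i => Finset.range (m i + 1)),
        ((r.factorial : ℝ) *
          ∏ i, (lam ^ (γ i) * mu ^ (m i - γ i) * ((m i).choose (γ i) : ℝ))) := by
        apply Finset.sum_le_sum_of_subset_of_nonneg
        · intro γ hγ
          rw [Finset.mem_filter] at hγ
          rw [Fintype.mem_piFinset]
          intro i
          rw [Finset.mem_range]
          exact Nat.lt_succ_of_le (hγ.2 i)
        · intro γ _ _
          positivity
    _ = (r.factorial : ℝ) * (lam + mu) ^ (∑ i, m i) := by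
        rw [← Finset.mul_sum]
        congr 1
        have h := Finset.prod_univ_sum (fun i : Fin d => Finset.range (m i + 1))
          (fun i j => lam ^ j * mu ^ (m i - j) * ((m i).choose j : ℝ))
        rw [← h, ← Finset.prod_pow_eq_pow_sum]
        exact Finset.prod_congr rfl fun i _ => (add_pow lam mu (m i)).symm

open Finset Classical in
lemma gev_core {d : ℕ} (r : ℕ) (β lam R : ℝ) (hβ : 1 ≤ β) (hlam : 0 < lam)
    (hlamR : lam < R) (m : Fin d → ℕ) :
    ∑ γ ∈ Finset.Nat.antidiagonalTuple d r,
      (if γ ≤ m then (R - lam) ^ (β * ∑ i, ((m i - γ i : ℕ) : ℝ)) /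
          (∏ i, ((m i - γ i).factorial : ℝ)) ^ β else 0)
    ≤ ((r.factorial : ℝ) / lam ^ r) ^ β *
        (R ^ (β * ∑ i, ((m i : ℕ) : ℝ)) / (∏ i, ((m i).factorial : ℝ)) ^ β) := by
  have hR : 0 < R := hlam.trans hlamR
  have hmu : (0:ℝ) ≤ R - lam := by linarith
  set F : ℝ := ∏ i, ((m i).factorial : ℝ) with hF
  have hF0 : 0 < F := by positivity
  set S : ℝ := (r.factorial : ℝ) * R ^ (∑ i, m i) with hS
  have hS0 : 0 < S := by positivity
  set t : (Fin d → ℕ) → ℝ := fun γ =>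
    if γ ≤ m then lam ^ r * (R - lam) ^ (∑ i, m i - r) *
      ∏ i, (((m i).factorial : ℝ) / ((m i - γ i).factorial : ℝ)) else 0 with ht
  have ht0 : ∀ γ, 0 ≤ t γ := by
    intro γ
    rw [ht]
    dsimp only
    split
    · positivity
    · exact le_rfl
  have h1 : ∑ γ ∈ Finset.Nat.antidiagonalTuple d r, t γ ≤ S := by
    have h := gev_core1 r lam (R - lam) hlam.le hmu m
    rw [ht]
    simpa using h
  have htS : ∀ γ ∈ Finset.Nat.antidiagonalTuple d r, t γ ≤ S := fun γ hγ =>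
    (Finset.single_le_sum (fun γ _ => ht0 γ) hγ).trans h1
  have hSβ : S * S ^ (β - 1) = S ^ β := by
    calc S * S ^ (β - 1) = S ^ (1:ℝ) * S ^ (β - 1) := by rw [Real.rpow_one]
      _ = S ^ (1 + (β - 1)) := (Real.rpow_add hS0 1 (β - 1)).symm
      _ = S ^ β := by ring_nf
  have htpow : ∀ γ ∈ Finset.Nat.antidiagonalTuple d r, t γ ^ β ≤ t γ * S ^ (β - 1) := by
    intro γ hγ
    rcases eq_or_lt_of_le (ht0 γ) with h0 | h0
    · rw [← h0, Real.zero_rpow (lt_of_lt_of_le one_pos hβ).ne', zero_mul]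
    · calc t γ ^ β = t γ ^ (1:ℝ) * t γ ^ (β - 1) := by
            rw [← Real.rpow_add h0]; ring_nf
        _ ≤ t γ ^ (1:ℝ) * S ^ (β - 1) := by
            apply mul_le_mul_of_nonneg_left
              (Real.rpow_le_rpow (ht0 γ) (htS γ hγ) (by linarith))
            exact Real.rpow_nonneg (ht0 γ) 1
        _ = t γ * S ^ (β - 1) := by rw [Real.rpow_one]
  have hsumpow : ∑ γ ∈ Finset.Nat.antidiagonalTuple d r, t γ ^ β ≤ S ^ β := by
    calc ∑ γ ∈ Finset.Nat.antidiagonalTuple d r, t γ ^ β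
        ≤ ∑ γ ∈ Finset.Nat.antidiagonalTuple d r, t γ * S ^ (β - 1) :=
          Finset.sum_le_sum htpow
      _ = (∑ γ ∈ Finset.Nat.antidiagonalTuple d r, t γ) * S ^ (β - 1) :=
          (Finset.sum_mul _ _ _).symm
      _ ≤ S * S ^ (β - 1) :=
          mul_le_mul_of_nonneg_right h1 (Real.rpow_nonneg hS0.le _)
      _ = S ^ β := hSβ
  have termeq : ∀ γ ∈ Finset.Nat.antidiagonalTuple d r,
      (if γ ≤ m then (R - lam) ^ (β * ∑ i, ((m i - γ i : ℕ) : ℝ)) /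
          (∏ i, ((m i - γ i).factorial : ℝ)) ^ β else 0)
        = t γ ^ β / ((lam ^ r) ^ β * F ^ β) := by
    intro γ hγ
    rw [Finset.Nat.mem_antidiagonalTuple] at hγ
    by_cases hle : γ ≤ m
    · have hle' : ∀ i, γ i ≤ m i := fun i => hle i
      rw [if_pos hle, ht]
      dsimp only
      rw [if_pos hle]
      set D : ℝ := ∏ i, ((m i - γ i).factorial : ℝ) with hD
      have hD0 : 0 < D := by positivity
      have hprodq : ∏ i, (((m i).factorial : ℝ) / ((m i - γ i).factorial : ℝ)) = F / D :=
        Finset.prod_div_distrib _ _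
      have hcast : ∑ i, ((m i - γ i : ℕ) : ℝ) = ((∑ i, m i - r : ℕ) : ℝ) := by
        rw [← Nat.cast_sum]
        congr 1
        have h2 : ∑ i, (m i - γ i) + ∑ i, γ i = ∑ i, m i := by
          rw [← Finset.sum_add_distrib]
          exact Finset.sum_congr rfl fun i _ => Nat.sub_add_cancel (hle' i)
        omega
      have e1 : (R - lam) ^ (β * ∑ i, ((m i - γ i : ℕ) : ℝ))
          = ((R - lam) ^ (∑ i, m i - r)) ^ β := by
        rw [hcast, mul_comm, Real.rpow_mul hmu, Real.rpow_natCast]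
      rw [hprodq, e1, Real.mul_rpow (by positivity) (by positivity),
        Real.mul_rpow (by positivity) (by positivity),
        Real.div_rpow hF0.le hD0.le]
      have hl0 : (0:ℝ) < (lam ^ r) ^ β := Real.rpow_pos_of_pos (by positivity) _
      have hFb : (0:ℝ) < F ^ β := Real.rpow_pos_of_pos hF0 _
      have hDb : (0:ℝ) < D ^ β := Real.rpow_pos_of_pos hD0 _
      field_simp
    · rw [if_neg hle, ht]
      dsimp only
      rw [if_neg hle, Real.zero_rpow (lt_of_lt_of_le one_pos hβ).ne', zero_div]
  have hl0 : (0:ℝ) < (lam ^ r) ^ β := Real.rpow_pos_of_pos (by positivity) _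
  have hFb : (0:ℝ) < F ^ β := Real.rpow_pos_of_pos hF0 _
  calc ∑ γ ∈ Finset.Nat.antidiagonalTuple d r,
        (if γ ≤ m then (R - lam) ^ (β * ∑ i, ((m i - γ i : ℕ) : ℝ)) /
          (∏ i, ((m i - γ i).factorial : ℝ)) ^ β else 0)
      = (∑ γ ∈ Finset.Nat.antidiagonalTuple d r, t γ ^ β) / ((lam ^ r) ^ β * F ^ β) := by
        rw [Finset.sum_div]
        exact Finset.sum_congr rfl termeq
    _ ≤ S ^ β / ((lam ^ r) ^ β * F ^ β) := by gcongr
    _ = ((r.factorial : ℝ) / lam ^ r) ^ β *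
        (R ^ (β * ∑ i, ((m i : ℕ) : ℝ)) / F ^ β) := by
        have e2 : R ^ (β * ∑ i, ((m i : ℕ) : ℝ)) = (R ^ (∑ i, m i)) ^ β := by
          rw [show (∑ i, ((m i : ℕ) : ℝ)) = ((∑ i, m i : ℕ) : ℝ) by rw [Nat.cast_sum],
            mul_comm, Real.rpow_mul hR.le, Real.rpow_natCast]
        rw [e2, hS, Real.mul_rpow (by positivity) (by positivity),
          Real.div_rpow (by positivity) (by positivity)]
        have hRb : (0:ℝ) < (R ^ (∑ i, m i)) ^ β := Real.rpow_pos_of_pos (by positivity) _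
        have hfb : (0:ℝ) < ((r.factorial : ℕ) : ℝ) ^ β := Real.rpow_pos_of_pos (by positivity) _
        field_simp

open Finset Classical in
lemma gev_core_single {d : ℕ} (r : ℕ) (β lam R : ℝ) (hβ : 1 ≤ β) (hlam : 0 < lam)
    (hlamR : lam < R) (m γ : Fin d → ℕ) (hγ : γ ∈ Finset.Nat.antidiagonalTuple d r) :
    (if γ ≤ m then (R - lam) ^ (β * ∑ i, ((m i - γ i : ℕ) : ℝ)) /
          (∏ i, ((m i - γ i).factorial : ℝ)) ^ β else 0)
    ≤ ((r.factorial : ℝ) / lam ^ r) ^ β *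
        (R ^ (β * ∑ i, ((m i : ℕ) : ℝ)) / (∏ i, ((m i).factorial : ℝ)) ^ β) := by
  refine le_trans (Finset.single_le_sum (f := fun γ =>
      (if γ ≤ m then (R - lam) ^ (β * ∑ i, ((m i - γ i : ℕ) : ℝ)) /
          (∏ i, ((m i - γ i).factorial : ℝ)) ^ β else 0)) (fun γ _ => ?_) hγ)
    (gev_core r β lam R hβ hlam hlamR m)
  split
  · exact div_nonneg (Real.rpow_nonneg (by linarith) _) (Real.rpow_nonneg (by positivity) _)
  · exact le_rfl

/-- Cauchy estimate for Gevrey norms: for `0 < λ < R` and `r ∈ ℕ`,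
`∑_{|γ|₁ = r} ‖∂^γ φ‖_{β,R-λ} ≤ (r!/λ^r)^β ‖φ‖_{β,R}`. -/
theorem gevrey_cauchy_estimate (d : ℕ) (hd : 1 ≤ d) (β lam R : ℝ)
    (hβ : 1 ≤ β) (hlam : 0 < lam) (hlamR : lam < R) (r : ℕ)
    (φ : (Fin d → ℝ) → ℝ) (hφ : ContDiff ℝ (⊤ : ℕ∞) φ) (hper : Periodic2pi φ)
    (hsum : Summable (gevreyTerm β R φ)) :
    (∑ γ ∈ Finset.Nat.antidiagonalTuple d r,
        gevreyNorm β (R - lam) (gevMDeriv γ φ)) ≤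
      ((r.factorial : ℝ) / lam ^ r) ^ β * gevreyNorm β R φ := by
  classical
  have hR : 0 < R := hlam.trans hlamR
  have hRl : (0:ℝ) ≤ R - lam := by linarith
  set C : ℝ := ((r.factorial : ℝ) / lam ^ r) ^ β with hC
  set g : (Fin d → ℕ) → (Fin d → ℕ) → ℝ := fun γ m =>
    if γ ≤ m then gevreyTerm β (R - lam) (gevMDeriv γ φ) (m - γ) else 0 with hg
  have hterm : ∀ (γ m : Fin d → ℕ), γ ≤ m →
      gevreyTerm β (R - lam) (gevMDeriv γ φ) (m - γ)
        = (R - lam) ^ (β * ∑ i, ((m i - γ i : ℕ) : ℝ)) /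
            (∏ i, ((m i - γ i).factorial : ℝ)) ^ β * supNorm (gevMDeriv m φ) := by
    intro γ m hle
    have hsub : (m - γ) + γ = m := funext fun i => Nat.sub_add_cancel (hle i)
    unfold gevreyTerm
    rw [gevMDeriv_gevMDeriv _ _ hφ, hsub]
    simp only [Pi.sub_apply]
  have hg0 : ∀ γ m, 0 ≤ g γ m := by
    intro γ m
    rw [hg]
    dsimp only
    split
    · exact gevreyTerm_nonneg hRl _ _
    · exact le_rfl
  have hgle : ∀ γ ∈ Finset.Nat.antidiagonalTuple d r, ∀ m,
      g γ m ≤ C * gevreyTerm β R φ m := by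
    intro γ hγ m
    have hcs := gev_core_single r β lam R hβ hlam hlamR m γ hγ
    rw [hg]
    dsimp only
    by_cases hle : γ ≤ m
    · rw [if_pos hle, hterm γ m hle]
      rw [if_pos hle] at hcs
      calc (R - lam) ^ (β * ∑ i, ((m i - γ i : ℕ) : ℝ)) /
            (∏ i, ((m i - γ i).factorial : ℝ)) ^ β * supNorm (gevMDeriv m φ)
          ≤ (C * (R ^ (β * ∑ i, ((m i : ℕ) : ℝ)) /
              (∏ i, ((m i).factorial : ℝ)) ^ β)) * supNorm (gevMDeriv m φ) :=
            mul_le_mul_of_nonneg_right hcs (supNorm_nonneg _)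
        _ = C * gevreyTerm β R φ m := by unfold gevreyTerm; ring
    · rw [if_neg hle]
      exact mul_nonneg (Real.rpow_nonneg (by positivity) _) (gevreyTerm_nonneg hR.le _ _)
  have hgsummable : ∀ γ ∈ Finset.Nat.antidiagonalTuple d r, Summable (g γ) := fun γ hγ =>
    Summable.of_nonneg_of_le (hg0 γ) (hgle γ hγ) (hsum.mul_left C)
  have hnorm : ∀ γ : Fin d → ℕ,
      gevreyNorm β (R - lam) (gevMDeriv γ φ) = ∑' m, g γ m := by
    intro γ
    have hinj : Function.Injective (fun k : Fin d → ℕ => k + γ) := by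
      intro a b hab
      funext i
      have := congrFun hab i
      simpa using this
    have hsupp : Function.support (g γ) ⊆ Set.range (fun k : Fin d → ℕ => k + γ) := by
      intro m hm
      rw [Function.mem_support, hg] at hm
      dsimp only at hm
      by_cases hle : γ ≤ m
      · exact ⟨m - γ, funext fun i => Nat.sub_add_cancel (hle i)⟩
      · exact absurd (if_neg hle) hm
    have htr := Function.Injective.tsum_eq hinj hsupp
    rw [gevreyNorm, ← htr]
    apply tsum_congr
    intro k
    have hle : γ ≤ k + γ := fun i => Nat.le_add_left (γ i) (k i)
    rw [hg]
    dsimp only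
    rw [if_pos hle, show (k + γ) - γ = k from funext fun i => Nat.add_sub_cancel (k i) (γ i)]
  have hkey : ∀ m, ∑ γ ∈ Finset.Nat.antidiagonalTuple d r, g γ m
      ≤ C * gevreyTerm β R φ m := by
    intro m
    have hcore := gev_core r β lam R hβ hlam hlamR m
    calc ∑ γ ∈ Finset.Nat.antidiagonalTuple d r, g γ m
        = (∑ γ ∈ Finset.Nat.antidiagonalTuple d r,
            if γ ≤ m then (R - lam) ^ (β * ∑ i, ((m i - γ i : ℕ) : ℝ)) /
              (∏ i, ((m i - γ i).factorial : ℝ)) ^ β else 0) * supNorm (gevMDeriv m φ) := by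
          rw [Finset.sum_mul]
          refine Finset.sum_congr rfl fun γ hγ => ?_
          rw [hg]
          dsimp only
          by_cases hle : γ ≤ m
          · rw [if_pos hle, if_pos hle, hterm γ m hle]
          · rw [if_neg hle, if_neg hle, zero_mul]
      _ ≤ (C * (R ^ (β * ∑ i, ((m i : ℕ) : ℝ)) /
            (∏ i, ((m i).factorial : ℝ)) ^ β)) * supNorm (gevMDeriv m φ) :=
          mul_le_mul_of_nonneg_right hcore (supNorm_nonneg _)
      _ = C * gevreyTerm β R φ m := by unfold gevreyTerm; ring
  calc ∑ γ ∈ Finset.Nat.antidiagonalTuple d r, gevreyNorm β (R - lam) (gevMDeriv γ φ)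
      = ∑ γ ∈ Finset.Nat.antidiagonalTuple d r, ∑' m, g γ m :=
        Finset.sum_congr rfl fun γ _ => hnorm γ
    _ = ∑' m, ∑ γ ∈ Finset.Nat.antidiagonalTuple d r, g γ m := (Summable.tsum_finsetSum hgsummable).symm
    _ ≤ ∑' m, C * gevreyTerm β R φ m :=
        Summable.tsum_le_tsum hkey (summable_sum hgsummable) (hsum.mul_left C)
    _ = C * gevreyNorm β R φ := by rw [tsum_mul_left]; rfl
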